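/- The number of k-cliques in G_k^{μ,υ}(X) equals (n/3)^{k−3} times the number of triangles in G_3^{μ,υ}(X). Both counts equal |{(i,j) : μ_i = 1, υ_j = 1, X_{i,j} = 1}| multiplied by (n/3)^{k−2} and n/3 respectively. -/

import Mathlib

/-- The gadget graph `G_k^{μ,υ}(X)` with vertex parts `U`, `Y`, `W_1, …, W_{k−2}`, each of
size `m = n/3`. Vertices: `inl i = u_i`, `inr (inl j) = y_j`, `inr (inr (p, j)) = w_{p,j}`. -/
def gadget (k m : ℕ) (μ υ : Fin m → Bool) (X : Fin m → Fin m → Bool) :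
    SimpleGraph (Fin m ⊕ Fin m ⊕ Fin (k - 2) × Fin m) where
  Adj a b :=
    match a, b with
    | .inl i, .inr (.inl j) => X i j = true
    | .inr (.inl j), .inl i => X i j = true
    | .inl i, .inr (.inr _) => μ i = true
    | .inr (.inr _), .inl i => μ i = true
    | .inr (.inl i), .inr (.inr _) => υ i = true
    | .inr (.inr _), .inr (.inl i) => υ i = true
    | .inr (.inr (p, _)), .inr (.inr (q, _)) => p ≠ q
    | _, _ => False
  symm := by
    constructor
    rintro (i | j | ⟨p, w⟩) (i' | j' | ⟨p', w'⟩) h <;> simp_all <;> exact Ne.symm h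
  loopless := by
    constructor
    rintro (i | j | ⟨p, w⟩) h <;> simp_all

/-! The parts `U`, `Y`, `W_1, …, W_{k−2}` of `G_k^{μ,υ}(X)` are independent sets, so a `k`-clique
meets each of these `k` parts in exactly one vertex: it is `{u_i, y_j, w_{1,f 1}, …, w_{k−2,f (k−2)}}`
for some `i`, `j` and `f : Fin (k − 2) → Fin m`. Such a set is a clique iff `u_i y_j` is an edge
and both `u_i` and `y_j` are joined to `W`, i.e. iff `μ_i = υ_j = X_{i,j} = 1`; the choice of `f`
is free. Hence there are `P · m^{k−2}` cliques, and `k = 3` gives the triangle count `P · m`. -/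

namespace gadget

variable {k m : ℕ} {μ υ : Fin m → Bool} {X : Fin m → Fin m → Bool}

/-- The index of the part containing a vertex: `U ↦ 0`, `Y ↦ 1`, `W_{p+1} ↦ p + 2`. -/
def part : Fin m ⊕ Fin m ⊕ Fin (k - 2) × Fin m → ℕ
  | .inl _ => 0
  | .inr (.inl _) => 1
  | .inr (.inr (p, _)) => p.val + 2

lemma part_lt (hk : 2 ≤ k) (a : Fin m ⊕ Fin m ⊕ Fin (k - 2) × Fin m) : part a < k := by
  rcases a with _ | _ | ⟨p, _⟩ <;> simp only [part] <;> omega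

lemma part_ne_of_adj {a b : Fin m ⊕ Fin m ⊕ Fin (k - 2) × Fin m}
    (h : (gadget k m μ υ X).Adj a b) : part a ≠ part b := by
  rcases a with _ | _ | ⟨p, _⟩ <;> rcases b with _ | _ | ⟨q, _⟩ <;>
    simp only [part, gadget] at h ⊢ <;> omega

lemma _root_.SimpleGraph.IsNClique.exists_mem_part_eq (hk : 2 ≤ k)
    {S : Finset (Fin m ⊕ Fin m ⊕ Fin (k - 2) × Fin m)}
    (hS : (gadget k m μ υ X).IsNClique k S) {v : ℕ} (hv : v < k) : ∃ a ∈ S, part a = v := by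
  have hinj : Set.InjOn (part (k := k) (m := m)) ↑S := by
    intro a ha b hb hab
    by_contra hne
    exact part_ne_of_adj (hS.isClique ha hb hne) hab
  have himage : S.image part = Finset.range k :=
    Finset.eq_of_subset_of_card_le
      (fun v hv => by
        obtain ⟨a, -, rfl⟩ := Finset.mem_image.mp hv
        exact Finset.mem_range.mpr (part_lt hk a))
      (by rw [Finset.card_image_of_injOn hinj, hS.card_eq, Finset.card_range])
  exact Finset.mem_image.mp (himage ▸ Finset.mem_range.mpr hv)

def transversal (i j : Fin m) (f : Fin (k - 2) → Fin m) :
    Finset (Fin m ⊕ Fin m ⊕ Fin (k - 2) × Fin m) :=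
  insert (.inl i) (insert (.inr (.inl j)) (Finset.univ.image fun p => .inr (.inr (p, f p))))

variable {i j : Fin m} {f : Fin (k - 2) → Fin m}

@[simp] lemma inl_mem_transversal {i' : Fin m} : .inl i' ∈ transversal i j f ↔ i' = i := by
  simp [transversal]

@[simp] lemma inr_inl_mem_transversal {j' : Fin m} :
    .inr (.inl j') ∈ transversal i j f ↔ j' = j := by
  simp [transversal]

@[simp] lemma inr_inr_mem_transversal {p : Fin (k - 2)} {x : Fin m} :
    .inr (.inr (p, x)) ∈ transversal i j f ↔ x = f p := by
  simp [transversal, eq_comm]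

lemma card_transversal (hk : 2 ≤ k) : (transversal i j f).card = k := by
  rw [transversal, Finset.card_insert_of_notMem (by simp), Finset.card_insert_of_notMem (by simp),
    Finset.card_image_of_injective _ fun p q h =>
      congrArg Prod.fst (Sum.inr_injective (Sum.inr_injective h)), Finset.card_univ,
    Fintype.card_fin]
  omega

lemma transversal_inj {i' j' : Fin m} {f' : Fin (k - 2) → Fin m} :
    transversal i j f = transversal i' j' f' ↔ i = i' ∧ j = j' ∧ f = f' := by
  refine ⟨fun h => ⟨?_, ?_, funext fun p => ?_⟩, by rintro ⟨rfl, rfl, rfl⟩; rfl⟩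
  · simpa using Finset.ext_iff.mp h (.inl i)
  · simpa using Finset.ext_iff.mp h (.inr (.inl j))
  · simpa using Finset.ext_iff.mp h (.inr (.inr (p, f p)))

lemma isNClique_transversal_iff (hk : 3 ≤ k) :
    (gadget k m μ υ X).IsNClique k (transversal i j f) ↔
      μ i = true ∧ υ j = true ∧ X i j = true := by
  let p₀ : Fin (k - 2) := ⟨0, by omega⟩
  rw [SimpleGraph.isNClique_iff, and_iff_left (card_transversal (by omega))]
  constructor
  · intro h
    exact ⟨@h (.inl i) (by simp) (.inr (.inr (p₀, f p₀))) (by simp) (by simp),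
      @h (.inr (.inl j)) (by simp) (.inr (.inr (p₀, f p₀))) (by simp) (by simp),
      @h (.inl i) (by simp) (.inr (.inl j)) (by simp) (by simp)⟩
  · rintro ⟨hμ, hυ, hX⟩ a ha b hb hab
    simp only [Finset.mem_coe, transversal, Finset.mem_insert, Finset.mem_image,
      Finset.mem_univ, true_and] at ha hb
    rcases ha with rfl | rfl | ⟨p, rfl⟩ <;> rcases hb with rfl | rfl | ⟨q, rfl⟩ <;>
      simp_all [gadget]

lemma _root_.SimpleGraph.IsNClique.exists_eq_transversal (hk : 2 ≤ k)
    {S : Finset (Fin m ⊕ Fin m ⊕ Fin (k - 2) × Fin m)}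
    (hS : (gadget k m μ υ X).IsNClique k S) : ∃ i j f, transversal i j f = S := by
  obtain ⟨i, hi⟩ : ∃ i, .inl i ∈ S := by
    obtain ⟨_ | _ | _, ha, h⟩ := hS.exists_mem_part_eq hk (v := 0) (by omega)
    exacts [⟨_, ha⟩, absurd h (by simp [part]), absurd h (by simp [part])]
  obtain ⟨j, hj⟩ : ∃ j, .inr (.inl j) ∈ S := by
    obtain ⟨_ | _ | _, ha, h⟩ := hS.exists_mem_part_eq hk (v := 1) (by omega)
    exacts [absurd h (by simp [part]), ⟨_, ha⟩, absurd h (by simp [part])]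
  have hW (p : Fin (k - 2)) : ∃ x, .inr (.inr (p, x)) ∈ S := by
    obtain ⟨_ | _ | ⟨q, x⟩, ha, h⟩ := hS.exists_mem_part_eq hk (v := p + 2) (by omega)
    · simp [part] at h
    · simp [part] at h
    · obtain rfl : q = p := Fin.ext (by simpa [part] using h)
      exact ⟨x, ha⟩
  choose f hf using hW
  refine ⟨i, j, f, Finset.eq_of_subset_of_card_le ?_ (by rw [hS.card_eq, card_transversal hk])⟩
  rintro (_ | _ | ⟨p, _⟩) h <;> simp only [inl_mem_transversal, inr_inl_mem_transversal,
    inr_inr_mem_transversal] at h <;> subst h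
  exacts [hi, hj, hf p]

theorem card_isNClique (hk : 3 ≤ k) :
    Nat.card {S : Finset (Fin m ⊕ Fin m ⊕ Fin (k - 2) × Fin m) //
        (gadget k m μ υ X).IsNClique k S} =
      Nat.card {ij : Fin m × Fin m // μ ij.1 = true ∧ υ ij.2 = true ∧ X ij.1 ij.2 = true} *
        m ^ (k - 2) := by
  let e : {ij : Fin m × Fin m // μ ij.1 = true ∧ υ ij.2 = true ∧ X ij.1 ij.2 = true} ×
      (Fin (k - 2) → Fin m) →
      {S : Finset (Fin m ⊕ Fin m ⊕ Fin (k - 2) × Fin m) // (gadget k m μ υ X).IsNClique k S} :=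
    fun z => ⟨transversal z.1.1.1 z.1.1.2 z.2, (isNClique_transversal_iff hk).mpr z.1.2⟩
  have he : e.Bijective := by
    constructor
    · rintro ⟨⟨⟨i, j⟩, _⟩, f⟩ ⟨⟨⟨i', j'⟩, _⟩, f'⟩ h
      obtain ⟨rfl, rfl, rfl⟩ := transversal_inj.mp (congrArg Subtype.val h)
      rfl
    · rintro ⟨S, hS⟩
      obtain ⟨i, j, f, rfl⟩ := hS.exists_eq_transversal (by omega)
      exact ⟨⟨⟨(i, j), (isNClique_transversal_iff hk).mp hS⟩, f⟩, rfl⟩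
  rw [← Nat.card_eq_of_bijective e he, Nat.card_prod, Nat.card_fun, Nat.card_fin, Nat.card_fin]

end gadget

/-- The number of `k`-cliques in `G_k^{μ,υ}(X)` equals `m^{k−3}` times the number of
triangles in `G_3^{μ,υ}(X)` (where `m = n/3`); moreover the clique count equals
`P · m^{k−2}` and the triangle count equals `P · m`, where
`P = |{(i,j) : μ_i = 1, υ_j = 1, X_{i,j} = 1}|`. -/
theorem stmt10 (k m : ℕ) (hk : 3 ≤ k) (μ υ : Fin m → Bool) (X : Fin m → Fin m → Bool) :
    Nat.card {S : Finset (Fin m ⊕ Fin m ⊕ Fin (k - 2) × Fin m) //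
        (gadget k m μ υ X).IsNClique k S} =
      m ^ (k - 3) *
        Nat.card {S : Finset (Fin m ⊕ Fin m ⊕ Fin (3 - 2) × Fin m) //
          (gadget 3 m μ υ X).IsNClique 3 S} ∧
    Nat.card {S : Finset (Fin m ⊕ Fin m ⊕ Fin (k - 2) × Fin m) //
        (gadget k m μ υ X).IsNClique k S} =
      Nat.card {ij : Fin m × Fin m //
          μ ij.1 = true ∧ υ ij.2 = true ∧ X ij.1 ij.2 = true} * m ^ (k - 2) ∧
    Nat.card {S : Finset (Fin m ⊕ Fin m ⊕ Fin (3 - 2) × Fin m) //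
        (gadget 3 m μ υ X).IsNClique 3 S} =
      Nat.card {ij : Fin m × Fin m //
          μ ij.1 = true ∧ υ ij.2 = true ∧ X ij.1 ij.2 = true} * m := by
  have cliques := gadget.card_isNClique (μ := μ) (υ := υ) (X := X) hk
  have triangles : _ = _ * m :=
    (gadget.card_isNClique (μ := μ) (υ := υ) (X := X) le_rfl).trans (congrArg (_ * ·) (pow_one m))
  refine ⟨?_, cliques, triangles⟩
  rw [cliques, triangles, show k - 2 = k - 3 + 1 by omega, pow_succ]
  ring
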